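/- arXiv:2501.16179 — 2 statements merged into one kernel-verified Lean document; each statement's English description precedes it below -/
import Mathlib

section
/- Fix ε ∈ (0, 1/2) and n ≥ 2. In cylindrical coordinate on ℝ^n with x = (x', x_{n-1}, x_n), r = √(x_{n-1}² + x_n²), θ = θ(x_{n-1}, x_n) ∈ [0, π] for x_n ≥ 0, the function h(x) = r^{1/2-ε} cos(((1-ε)/2)θ) satisfies: (a) -Δh = (ε/2 - 3ε²/4) r^{-3/2-ε} cos(((1-ε)/2)θ) in the upper half ball B_1⁺; (b) h = r^{1/2-ε} sin(επ/2) ≥ 0 on F = {x ∈ B_1 : x_n = 0, x_{n-1} ≤ 0}; (c) ∂h/∂θ = 0 on Γ_N = {x ∈ B_1 : x_n = 0, x_{n-1} > 0}; and (d) r^{1/2-ε} sin(επ/2) ≤ h(x) ≤ r^{1/2-ε} for θ ∈ [0, π]. Furthermore ε/2 - 3ε²/4 > 0 for any ε ∈ (0, 1/2). -/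
open Real Set

/-
The barrier is `r ^ a * cos (b * θ)` with `a = 1/2 - ε` and `b = (1 - ε)/2`. Separation of
variables gives `Δ (r ^ a * cos (b * θ)) = (a ^ 2 - b ^ 2) * r ^ (a - 2) * cos (b * θ)`, and
`b ^ 2 - a ^ 2 = ε/2 - 3ε²/4`. Since `b * θ ∈ [0, b * π] ⊆ [0, π]`, monotonicity of `cos` there
squeezes `cos (b * θ)` between `cos (b * π) = sin (ε * π / 2)` and `1`.
-/

theorem iteratedDeriv_two_rpow_const (a x : ℝ) :
    iteratedDeriv 2 (fun s : ℝ => s ^ a) x = a * (a - 1) * x ^ (a - 2) := by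
  rw [iteratedDeriv_succ, iteratedDeriv_one, deriv_rpow_const']
  simp only [deriv_const_mul_field', Real.deriv_rpow_const]
  ring_nf

theorem iteratedDeriv_two_cos_mul (b θ : ℝ) :
    iteratedDeriv 2 (fun t : ℝ => cos (b * t)) θ = -(b ^ 2 * cos (b * θ)) := by
  rw [iteratedDeriv_comp_const_mul contDiff_cos, show 2 = 2 * 1 from rfl,
    iteratedDeriv_even_cos]
  simp

theorem deriv_cos_mul (b θ : ℝ) : deriv (fun t : ℝ => cos (b * t)) θ = -(b * sin (b * θ)) := by
  simpa [mul_comm] using (((hasDerivAt_id θ).const_mul b).cos).deriv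

theorem polar_laplacian_rpow_mul_cos (a b : ℝ) {r : ℝ} (hr : 0 < r) (θ : ℝ) :
    iteratedDeriv 2 (fun s : ℝ => s ^ a * cos (b * θ)) r
        + (1 / r) * deriv (fun s : ℝ => s ^ a * cos (b * θ)) r
        + (1 / r ^ 2) * iteratedDeriv 2 (fun t : ℝ => r ^ a * cos (b * t)) θ
      = (a ^ 2 - b ^ 2) * r ^ (a - 2) * cos (b * θ) := by
  rw [iteratedDeriv_mul_const_field, iteratedDeriv_two_rpow_const, deriv_mul_const_field,
    Real.deriv_rpow_const, iteratedDeriv_const_mul_field, iteratedDeriv_two_cos_mul]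
  have hsub_one : r ^ (a - 1) = r ^ (a - 2) * r := by
    rw [← rpow_add_one hr.ne']; ring_nf
  have hsplit : r ^ a = r ^ (a - 2) * r ^ 2 := by
    rw [← rpow_natCast, ← rpow_add hr]; norm_num
  rw [hsub_one, hsplit]
  field_simp
  ring

theorem cos_one_sub_mul_pi_div_two (ε : ℝ) : cos ((1 - ε) / 2 * π) = sin (ε * π / 2) := by
  rw [← cos_pi_div_two_sub]; ring_nf

theorem cos_mul_pi_le_cos_mul {b θ : ℝ} (hb₀ : 0 ≤ b) (hb₁ : b ≤ 1) (hθ : θ ∈ Icc 0 π) :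
    cos (b * π) ≤ cos (b * θ) :=
  cos_le_cos_of_nonneg_of_le_pi (mul_nonneg hb₀ hθ.1) (by nlinarith [pi_pos])
    (mul_le_mul_of_nonneg_left hθ.2 hb₀)

theorem barrier_properties_general (ε : ℝ) (hε : ε ∈ Set.Ioo (0:ℝ) (1/2)) :
    (∀ r ∈ Set.Ioo (0:ℝ) 1, ∀ θ ∈ Set.Ioo (0:ℝ) Real.pi,
      -(iteratedDeriv 2 (fun s : ℝ => s ^ ((1:ℝ)/2 - ε) * Real.cos ((1 - ε)/2 * θ)) r
          + (1/r) * deriv (fun s : ℝ => s ^ ((1:ℝ)/2 - ε) * Real.cos ((1 - ε)/2 * θ)) r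
          + (1/r^2) *
            iteratedDeriv 2 (fun t : ℝ => r ^ ((1:ℝ)/2 - ε) * Real.cos ((1 - ε)/2 * t)) θ)
        = (ε/2 - 3*ε^2/4) * r ^ (-(3:ℝ)/2 - ε) * Real.cos ((1 - ε)/2 * θ)) ∧
    (∀ r ∈ Set.Icc (0:ℝ) 1,
      r ^ ((1:ℝ)/2 - ε) * Real.cos ((1 - ε)/2 * Real.pi)
          = r ^ ((1:ℝ)/2 - ε) * Real.sin (ε * Real.pi / 2) ∧
        0 ≤ r ^ ((1:ℝ)/2 - ε) * Real.cos ((1 - ε)/2 * Real.pi)) ∧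
    (∀ r ∈ Set.Ioo (0:ℝ) 1,
      deriv (fun t : ℝ => r ^ ((1:ℝ)/2 - ε) * Real.cos ((1 - ε)/2 * t)) 0 = 0) ∧
    (∀ r ∈ Set.Icc (0:ℝ) 1, ∀ θ ∈ Set.Icc (0:ℝ) Real.pi,
      r ^ ((1:ℝ)/2 - ε) * Real.sin (ε * Real.pi / 2)
          ≤ r ^ ((1:ℝ)/2 - ε) * Real.cos ((1 - ε)/2 * θ) ∧
        r ^ ((1:ℝ)/2 - ε) * Real.cos ((1 - ε)/2 * θ) ≤ r ^ ((1:ℝ)/2 - ε)) ∧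
    0 < ε/2 - 3*ε^2/4 := by
  obtain ⟨hε₀, hε₁⟩ := hε
  have hsin : 0 ≤ sin (ε * π / 2) :=
    sin_nonneg_of_nonneg_of_le_pi (by positivity) (by nlinarith [pi_pos])
  refine ⟨fun r hr θ _ => ?_, fun r hr => ?_, fun r _ => by simp [deriv_cos_mul], fun r hr θ hθ => ?_,
    by nlinarith⟩
  · rw [polar_laplacian_rpow_mul_cos _ _ hr.1, show (1:ℝ)/2 - ε - 2 = -(3:ℝ)/2 - ε by ring]
    ring
  · rw [cos_one_sub_mul_pi_div_two]
    exact ⟨rfl, mul_nonneg (rpow_nonneg hr.1 _) hsin⟩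
  · have hpow := rpow_nonneg hr.1 ((1:ℝ)/2 - ε)
    rw [← cos_one_sub_mul_pi_div_two]
    exact ⟨mul_le_mul_of_nonneg_left (cos_mul_pi_le_cos_mul (by linarith) (by linarith) hθ) hpow,
      mul_le_of_le_one_right hpow (cos_le_one _)⟩

/-- properties of the barrier `h(x) = r^{1/2-ε} cos(((1-ε)/2)θ)` in the
cylindrical coordinates `(x', r, θ)` on `ℝⁿ` (`n ≥ 2`), where `θ ∈ [0, π]` parametrizes
the upper half `x_n ≥ 0`.  Since `h` depends only on `(r, θ)`, we express the Laplacian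
by `Δ = ∂_{rr} + (1/r)∂_r + (1/r²)∂_{θθ}`:
(a) `-Δh = (ε/2 - 3ε²/4) r^{-3/2-ε} cos(((1-ε)/2)θ)` in the upper half ball;
(b) on `F` (i.e. `θ = π`), `h = r^{1/2-ε} sin(επ/2) ≥ 0`;
(c) on `Γ_N` (i.e. `θ = 0`), `∂h/∂θ = 0`;
(d) `r^{1/2-ε} sin(επ/2) ≤ h ≤ r^{1/2-ε}` for `θ ∈ [0, π]`;
and `ε/2 - 3ε²/4 > 0` for every `ε ∈ (0, 1/2)`. -/
theorem barrier_properties (n : ℕ) (hn : 2 ≤ n) (ε : ℝ) (hε : ε ∈ Set.Ioo (0:ℝ) (1/2)) :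
    (∀ r ∈ Set.Ioo (0:ℝ) 1, ∀ θ ∈ Set.Ioo (0:ℝ) Real.pi,
      -(iteratedDeriv 2 (fun s : ℝ => s ^ ((1:ℝ)/2 - ε) * Real.cos ((1 - ε)/2 * θ)) r
          + (1/r) * deriv (fun s : ℝ => s ^ ((1:ℝ)/2 - ε) * Real.cos ((1 - ε)/2 * θ)) r
          + (1/r^2) *
            iteratedDeriv 2 (fun t : ℝ => r ^ ((1:ℝ)/2 - ε) * Real.cos ((1 - ε)/2 * t)) θ)
        = (ε/2 - 3*ε^2/4) * r ^ (-(3:ℝ)/2 - ε) * Real.cos ((1 - ε)/2 * θ)) ∧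
    (∀ r ∈ Set.Icc (0:ℝ) 1,
      r ^ ((1:ℝ)/2 - ε) * Real.cos ((1 - ε)/2 * Real.pi)
          = r ^ ((1:ℝ)/2 - ε) * Real.sin (ε * Real.pi / 2) ∧
        0 ≤ r ^ ((1:ℝ)/2 - ε) * Real.cos ((1 - ε)/2 * Real.pi)) ∧
    (∀ r ∈ Set.Ioo (0:ℝ) 1,
      deriv (fun t : ℝ => r ^ ((1:ℝ)/2 - ε) * Real.cos ((1 - ε)/2 * t)) 0 = 0) ∧
    (∀ r ∈ Set.Icc (0:ℝ) 1, ∀ θ ∈ Set.Icc (0:ℝ) Real.pi,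
      r ^ ((1:ℝ)/2 - ε) * Real.sin (ε * Real.pi / 2)
          ≤ r ^ ((1:ℝ)/2 - ε) * Real.cos ((1 - ε)/2 * θ) ∧
        r ^ ((1:ℝ)/2 - ε) * Real.cos ((1 - ε)/2 * θ) ≤ r ^ ((1:ℝ)/2 - ε)) ∧
    0 < ε/2 - 3*ε^2/4 :=
  barrier_properties_general ε hε
end

section
/- (Classification of homogeneous blowups in 2D) Let κ > 0 and suppose u_0 : ℝ² → ℝ is continuous, homogeneous of degree κ, symmetric with respect to {x_2 = 0}, harmonic in the open upper and lower half-planes, and satisfies: u_0 ≥ 0 and ∂_ν u_0 ≥ 0 with u_0 · ∂_ν u_0 = 0 on the half-line {(x_1, 0) : x_1 < 0}, and ∂_ν u_0 = 0 on {(x_1, 0) : x_1 > 0} (ν the upward normal from below). If u_0 is not identically zero, then in polar coordinates u_0(r, θ) = b r^κ cos(κθ) for some b ≠ 0, and either κ ∈ {2m, 2m + 3/2 : m ∈ ℕ₀} with b > 0, or κ ∈ {2m + 1, 2m + 1/2 : m ∈ ℕ₀} with b < 0. In particular κ ∈ ½ℕ. -/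
/-!
Homogeneity of degree `κ` and `Δu₀ = 0` turn the restriction `Φ(θ) = u₀(e^{iθ})` to the upper
unit half-circle into a solution of `Φ'' + κ²Φ = 0`, so `u₀ = r^κ (A cos κθ + B sin κθ)` on the
closed upper half-plane (by continuity up to the boundary), and on the lower one by symmetry.
The normal derivative at `x = 1` is `-κB`, so the Neumann condition forces `B = 0`.
At `x = -1` the Signorini conditions read `A cos κπ ≥ 0`, `-κA sin κπ ≥ 0` and
`A² κ cos κπ sin κπ = 0`; hence `κ ∈ ½ℕ`, and the parity of `2κ` fixes the sign of `A`.
-/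

open Real

noncomputable section

/-- Pointwise Laplacian of a function on ℝ² ≅ ℂ. -/
def lap2 (u : ℂ → ℝ) (z : ℂ) : ℝ :=
  iteratedDeriv 2 (fun t : ℝ => u (z + t)) 0
    + iteratedDeriv 2 (fun t : ℝ => u (z + t * Complex.I)) 0

/-- Harmonic on an open set `s`: `C²` with vanishing Laplacian. -/
def HarmonicOn2 (u : ℂ → ℝ) (s : Set ℂ) : Prop :=
  ContDiffOn ℝ 2 u s ∧ ∀ z ∈ s, lap2 u z = 0

/-- The normal derivative on the line `{x₂ = 0}`: upward derivative computed from below. -/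
def nuDeriv (u : ℂ → ℝ) (x : ℝ) : ℝ :=
  derivWithin (fun y : ℝ => u (x + y * Complex.I)) (Set.Iio 0) 0

open Set Topology

section Homogeneous

variable {E F : Type*} [NormedAddCommGroup E] [NormedSpace ℝ E]
  [NormedAddCommGroup F] [NormedSpace ℝ F]

def IsPosHomogeneous (κ : ℝ) (f : E → F) : Prop :=
  ∀ l : ℝ, 0 < l → ∀ x, f (l • x) = l ^ κ • f x

namespace IsPosHomogeneous

variable {κ : ℝ} {f : E → F}

theorem apply_zero (hf : IsPosHomogeneous κ f) (hκ : κ ≠ 0) : f 0 = 0 := by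
  have h := hf 2 two_pos 0
  rw [smul_zero] at h
  have hpow : (2 : ℝ) ^ κ ≠ 1 := fun h' =>
    hκ ((rpow_right_inj two_pos (by norm_num)).mp (h'.trans (rpow_zero 2).symm))
  have : ((2 : ℝ) ^ κ - 1) • f 0 = 0 := by rw [sub_smul, ← h, one_smul, sub_self]
  exact (smul_eq_zero.mp this).resolve_left (sub_ne_zero.mpr hpow)

theorem fderiv_isPosHomogeneous (hf : IsPosHomogeneous κ f) :
    IsPosHomogeneous (κ - 1) (fderiv ℝ f) := by
  intro l hl x
  have h : (fun y => f (l • y)) = l ^ κ • f := funext (hf l hl)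
  have : Invertible (l ^ κ) := invertibleOfNonzero (rpow_pos_of_pos hl κ).ne'
  have key := congrArg (fun g => fderiv ℝ g x) h
  rw [fderiv_comp_smul, fderiv_const_smul_of_invertible] at key
  rw [rpow_sub_one hl.ne', div_eq_inv_mul, mul_smul, ← key, inv_smul_smul₀ hl.ne']

theorem fderiv_apply_self (hf : IsPosHomogeneous κ f) {x : E}
    (hx : DifferentiableAt ℝ f x) : fderiv ℝ f x x = κ • f x := by
  have hline : HasDerivAt (fun l : ℝ => f (l • x)) (fderiv ℝ f x x) 1 := by
    rw [← one_smul ℝ x] at hx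
    simpa [Function.comp_def] using
      hx.hasFDerivAt.comp_hasDerivAt (1 : ℝ) ((hasDerivAt_id (1 : ℝ)).smul_const x)
  have hpow : HasDerivAt (fun l : ℝ => l ^ κ • f x) (κ • f x) 1 := by
    simpa using (hasDerivAt_rpow_const (x := 1) (p := κ) (Or.inl one_ne_zero)).smul_const (f x)
  refine hline.unique (hpow.congr_of_eventuallyEq ?_)
  filter_upwards [Ioi_mem_nhds one_pos] with l hl
  exact hf l hl x

theorem fderiv_fderiv_apply_self (hf : IsPosHomogeneous κ f) {x : E}
    (hx : DifferentiableAt ℝ f x) (hx' : DifferentiableAt ℝ (fderiv ℝ f) x) :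
    fderiv ℝ (fderiv ℝ f) x x x = ((κ - 1) * κ) • f x := by
  rw [hf.fderiv_isPosHomogeneous.fderiv_apply_self hx', smul_apply,
    hf.fderiv_apply_self hx, smul_smul]

end IsPosHomogeneous

theorem iteratedDeriv_two_comp_add_smul {u : E → F} {z : E} (hu : ContDiffAt ℝ 2 u z) (v : E) :
    iteratedDeriv 2 (fun t : ℝ => u (z + t • v)) 0 = fderiv ℝ (fderiv ℝ u) z v v := by
  have hline (t : ℝ) : HasDerivAt (fun s : ℝ => z + s • v) v t := by
    simpa using ((hasDerivAt_id t).smul_const v).const_add z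
  have hfirst : deriv (fun t : ℝ => u (z + t • v)) =ᶠ[𝓝 0]
      fun t => fderiv ℝ u (z + t • v) v := by
    have hnear : ∀ᶠ t : ℝ in 𝓝 0, DifferentiableAt ℝ u (z + t • v) := by
      have hcont : ContinuousAt (fun t : ℝ => z + t • v) 0 := (hline 0).continuousAt
      refine hcont.eventually (p := fun w => DifferentiableAt ℝ u w) ?_
      simpa using (hu.eventually (by simp)).mono fun w hw => hw.differentiableAt (by simp)
    filter_upwards [hnear] with t ht
    exact (ht.hasFDerivAt.comp_hasDerivAt t (hline t)).deriv
  have hsecond : HasDerivAt (fun t : ℝ => fderiv ℝ u (z + t • v) v)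
      (fderiv ℝ (fderiv ℝ u) z v v) 0 := by
    have hD : DifferentiableAt ℝ (fderiv ℝ u) (z + (0 : ℝ) • v) := by
      simpa using (hu.fderiv_right (m := 1) (by norm_num)).differentiableAt one_ne_zero
    have hcomp := hD.hasFDerivAt.comp_hasDerivAt (0 : ℝ) (hline 0)
    have := hcomp.clm_apply (hasDerivAt_const (0 : ℝ) v)
    rw [zero_smul, add_zero] at this
    simpa only [Function.comp_apply, map_zero, add_zero] using this
  rw [show (2 : ℕ) = 1 + 1 from rfl, iteratedDeriv_succ, iteratedDeriv_one, hfirst.deriv_eq,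
    hsecond.deriv]

end Homogeneous

theorem exists_eq_cos_sin_of_hasDerivAt {ω : ℝ} (hω : ω ≠ 0) {s : Set ℝ} (hs : IsOpen s)
    (hs' : IsPreconnected s) {f f' : ℝ → ℝ} (hf : ∀ t ∈ s, HasDerivAt f (f' t) t)
    (hf' : ∀ t ∈ s, HasDerivAt f' (-ω ^ 2 * f t) t) :
    ∃ A B : ℝ, ∀ t ∈ s, f t = A * cos (ω * t) + B * sin (ω * t) := by
  have hcos (t : ℝ) : HasDerivAt (fun t => cos (ω * t)) (-sin (ω * t) * ω) t := by
    simpa using ((hasDerivAt_id t).const_mul ω).cos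
  have hsin (t : ℝ) : HasDerivAt (fun t => sin (ω * t)) (cos (ω * t) * ω) t := by
    simpa using ((hasDerivAt_id t).const_mul ω).sin
  -- the coordinates of `(f, f' / ω)` in the rotating frame are first integrals
  set g : ℝ → ℝ := fun t => f t * cos (ω * t) - f' t / ω * sin (ω * t)
  set h : ℝ → ℝ := fun t => f t * sin (ω * t) + f' t / ω * cos (ω * t)
  have hg : ∀ t ∈ s, HasDerivAt g 0 t := fun t ht => by
    refine (((hf t ht).mul (hcos t)).sub (((hf' t ht).div_const ω).mul (hsin t))).congr_deriv ?_
    field_simp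
    ring
  have hh : ∀ t ∈ s, HasDerivAt h 0 t := fun t ht => by
    refine (((hf t ht).mul (hsin t)).add (((hf' t ht).div_const ω).mul (hcos t))).congr_deriv ?_
    field_simp
    ring
  have hconst {k : ℝ → ℝ} (hk : ∀ t ∈ s, HasDerivAt k 0 t) : ∃ a, ∀ t ∈ s, k t = a :=
    hs.exists_is_const_of_deriv_eq_zero hs'
      (fun t ht => (hk t ht).differentiableAt.differentiableWithinAt)
      (fun t ht => (hk t ht).deriv)
  obtain ⟨A, hA⟩ := hconst hg
  obtain ⟨B, hB⟩ := hconst hh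
  refine ⟨A, B, fun t ht => ?_⟩
  rw [← hA t ht, ← hB t ht]
  linear_combination (-f t) * sin_sq_add_cos_sq (ω * t)

open Complex (I)

theorem lap2_eq_fderiv_fderiv {u : ℂ → ℝ} {z : ℂ} (hu : ContDiffAt ℝ 2 u z) :
    lap2 u z = fderiv ℝ (fderiv ℝ u) z 1 1 + fderiv ℝ (fderiv ℝ u) z I I := by
  rw [← iteratedDeriv_two_comp_add_smul hu, ← iteratedDeriv_two_comp_add_smul hu]
  simp only [lap2, Complex.real_smul, mul_one]

theorem ContinuousLinearMap.diag_mul_I_add_diag {F : Type*} [NormedAddCommGroup F]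
    [NormedSpace ℝ F] (M : ℂ →L[ℝ] ℂ →L[ℝ] F) (z : ℂ) :
    M (z * I) (z * I) + M z z = Complex.normSq z • (M 1 1 + M I I) := by
  obtain ⟨a, b, rfl⟩ : ∃ a b : ℝ, z = a • (1 : ℂ) + b • I :=
    ⟨z.re, z.im, by simp [Complex.real_smul, Complex.re_add_im]⟩
  have hzI : (a • (1 : ℂ) + b • I) * I = (-b) • (1 : ℂ) + a • I := by
    apply Complex.ext <;> simp
  have hnormSq : Complex.normSq (a • (1 : ℂ) + b • I) = a * a + b * b := by
    simp [Complex.normSq_apply]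
  rw [hzI, hnormSq]
  simp only [map_add, map_smul, add_apply, smul_apply]
  module

theorem hasDerivAt_exp_ofReal_mul_I (θ : ℝ) :
    HasDerivAt (fun θ : ℝ => Complex.exp (θ * I)) (Complex.exp (θ * I) * I) θ := by
  simpa using ((Complex.ofRealCLM.hasDerivAt (x := θ)).mul_const I).cexp

theorem IsPosHomogeneous.hasDerivAt_fderiv_exp_mul_I {κ : ℝ} {u : ℂ → ℝ}
    (hu : IsPosHomogeneous κ u) {θ : ℝ} (hreg : ContDiffAt ℝ 2 u (Complex.exp (θ * I)))
    (hlap : lap2 u (Complex.exp (θ * I)) = 0) :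
    HasDerivAt (fun θ : ℝ => fderiv ℝ u (Complex.exp (θ * I)) (Complex.exp (θ * I) * I))
      (-κ ^ 2 * u (Complex.exp (θ * I))) θ := by
  have hdiff : DifferentiableAt ℝ u (Complex.exp (θ * I)) := hreg.differentiableAt (by norm_num)
  have hdiff' : DifferentiableAt ℝ (fderiv ℝ u) (Complex.exp (θ * I)) :=
    (hreg.fderiv_right (m := 1) (by norm_num)).differentiableAt one_ne_zero
  have hD2 : HasDerivAt (fun θ : ℝ => fderiv ℝ u (Complex.exp (θ * I)))
      (fderiv ℝ (fderiv ℝ u) (Complex.exp (θ * I)) (Complex.exp (θ * I) * I)) θ :=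
    hdiff'.hasFDerivAt.comp_hasDerivAt θ (hasDerivAt_exp_ofReal_mul_I θ)
  refine (hD2.clm_apply ((hasDerivAt_exp_ofReal_mul_I θ).mul_const I)).congr_deriv ?_
  set c := Complex.exp (θ * I)
  -- `Φ'' = D²u(c)(ic, ic) - Du(c) c`; the rotation identity trades `D²u(c)(ic, ic)` for
  -- `|c|² Δu(c) - D²u(c)(c, c)`, and Euler's relations evaluate what is left.
  have hrot := (fderiv ℝ (fderiv ℝ u) c).diag_mul_I_add_diag c
  rw [← lap2_eq_fderiv_fderiv hreg, hlap, smul_zero,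
    hu.fderiv_fderiv_apply_self hdiff hdiff'] at hrot
  have hII : c * I * I = -c := by rw [mul_assoc, Complex.I_mul_I, mul_neg_one]
  simp only [hII, map_neg, hu.fderiv_apply_self hdiff, smul_eq_mul]
  linear_combination hrot

theorem IsPosHomogeneous.exists_eq_cos_sin_of_harmonicOn2 {κ : ℝ} (hκ : κ ≠ 0) {u : ℂ → ℝ}
    (hu : IsPosHomogeneous κ u) (hharm : HarmonicOn2 u {z | 0 < z.im}) :
    ∃ A B : ℝ, ∀ θ ∈ Ioo 0 π,
      u (Complex.exp (θ * I)) = A * cos (κ * θ) + B * sin (κ * θ) := by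
  have him : ∀ θ ∈ Ioo 0 π, 0 < (Complex.exp (θ * I)).im := fun θ hθ => by
    rw [Complex.exp_ofReal_mul_I_im]
    exact sin_pos_of_pos_of_lt_pi hθ.1 hθ.2
  have hreg : ∀ θ ∈ Ioo 0 π, ContDiffAt ℝ 2 u (Complex.exp (θ * I)) := fun θ hθ =>
    hharm.1.contDiffAt ((isOpen_lt continuous_const Complex.continuous_im).mem_nhds (him θ hθ))
  exact exists_eq_cos_sin_of_hasDerivAt hκ isOpen_Ioo isPreconnected_Ioo
    (f' := fun θ => fderiv ℝ u (Complex.exp (θ * I)) (Complex.exp (θ * I) * I))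
    (fun θ hθ => ((hreg θ hθ).differentiableAt (by norm_num)).hasFDerivAt.comp_hasDerivAt θ
      (hasDerivAt_exp_ofReal_mul_I θ))
    (fun θ hθ => hu.hasDerivAt_fderiv_exp_mul_I (hreg θ hθ) (hharm.2 _ (him θ hθ)))

theorem IsPosHomogeneous.exists_polar_eq_cos_sin {κ : ℝ} (hκ : κ ≠ 0) {u : ℂ → ℝ}
    (hu : IsPosHomogeneous κ u) (hcont : Continuous u) (hharm : HarmonicOn2 u {z | 0 < z.im}) :
    ∃ A B : ℝ, ∀ r : ℝ, 0 < r → ∀ θ ∈ Icc 0 π,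
      u (r * Complex.exp (θ * I)) = r ^ κ * (A * cos (κ * θ) + B * sin (κ * θ)) := by
  obtain ⟨A, B, hAB⟩ := hu.exists_eq_cos_sin_of_harmonicOn2 hκ hharm
  have hclosure : EqOn (fun θ : ℝ => u (Complex.exp (θ * I)))
      (fun θ => A * cos (κ * θ) + B * sin (κ * θ)) (Icc 0 π) := by
    rw [← closure_Ioo pi_pos.ne]
    exact EqOn.closure hAB (by fun_prop) (by fun_prop)
  refine ⟨A, B, fun r hr θ hθ => ?_⟩
  rw [← Complex.real_smul, hu r hr, smul_eq_mul]
  exact congrArg _ (hclosure hθ)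

theorem nuDeriv_eq_of_hasDerivAt {u : ℂ → ℝ} {x d : ℝ} {G : ℝ → ℝ} (hG : HasDerivAt G d 0)
    (hu : ∀ y : ℝ, y ≤ 0 → u (x + y * I) = G y) : nuDeriv u x = d := by
  refine (hG.hasDerivWithinAt.congr (fun y hy => hu y (le_of_lt hy)) ?_).derivWithin
    (uniqueDiffWithinAt_Iio 0)
  simpa using hu 0 le_rfl

theorem one_add_mul_I_eq_sqrt_mul_exp (t : ℝ) :
    1 + t * I = (√(1 + t ^ 2) : ℂ) * Complex.exp (arctan t * I) := by
  have hs : (√(1 + t ^ 2) : ℂ) ≠ 0 := Complex.ofReal_ne_zero.mpr (by positivity)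
  rw [Complex.exp_mul_I, ← Complex.ofReal_cos, ← Complex.ofReal_sin, cos_arctan, sin_arctan]
  push_cast
  field_simp

theorem hasDerivAt_sqrt_rpow_mul_comp_arctan (κ ε : ℝ) {Ψ : ℝ → ℝ} {θ₀ d : ℝ}
    (hΨ : HasDerivAt Ψ d θ₀) :
    HasDerivAt (fun y => √(1 + y ^ 2) ^ κ * Ψ (θ₀ + ε * arctan y)) (ε * d) 0 := by
  have hsqrt : HasDerivAt (fun y : ℝ => √(1 + y ^ 2) ^ κ) 0 0 := by
    have h := (((hasDerivAt_pow 2 (0 : ℝ)).const_add 1).sqrt (by norm_num)).rpow_const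
      (p := κ) (Or.inl (by norm_num))
    simpa using h
  have hangle : HasDerivAt (fun y => θ₀ + ε * arctan y) ε 0 := by
    simpa using ((hasDerivAt_arctan 0).const_mul ε).const_add θ₀
  have hΨ' : HasDerivAt Ψ d (θ₀ + ε * arctan 0) := by simpa using hΨ
  refine (hsqrt.mul (hΨ'.comp 0 hangle)).congr_deriv ?_
  simp [mul_comm]

section Polar

variable {κ : ℝ} {u : ℂ → ℝ} {Ψ : ℝ → ℝ}

theorem nuDeriv_eq_of_polar (hsym : ∀ z : ℂ, u (starRingEnd ℂ z) = u z)
    (hpolar : ∀ r : ℝ, 0 < r → ∀ θ ∈ Icc 0 π, u (r * Complex.exp (θ * I)) = r ^ κ * Ψ θ)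
    {x θ₀ ε d : ℝ}
    (hcurve : ∀ y : ℝ, y ≤ 0 →
      (x : ℂ) - y * I = √(1 + y ^ 2) * Complex.exp ((θ₀ + ε * arctan y : ℝ) * I))
    (hangle : ∀ y : ℝ, y ≤ 0 → θ₀ + ε * arctan y ∈ Icc 0 π) (hΨ : HasDerivAt Ψ d θ₀) :
    nuDeriv u x = ε * d := by
  -- by symmetry, approaching `x` from below along `x + iy` is approaching it from above
  -- along `x - iy`, where the polar form is available
  refine nuDeriv_eq_of_hasDerivAt (hasDerivAt_sqrt_rpow_mul_comp_arctan κ ε hΨ) fun y hy => ?_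
  rw [← hsym, map_add, map_mul, Complex.conj_ofReal, Complex.conj_ofReal, Complex.conj_I,
    mul_neg, ← sub_eq_add_neg, hcurve y hy, hpolar _ (by positivity) _ (hangle y hy)]

theorem nuDeriv_one_eq_of_polar (hsym : ∀ z : ℂ, u (starRingEnd ℂ z) = u z)
    (hpolar : ∀ r : ℝ, 0 < r → ∀ θ ∈ Icc 0 π, u (r * Complex.exp (θ * I)) = r ^ κ * Ψ θ)
    {d : ℝ} (hΨ : HasDerivAt Ψ d 0) : nuDeriv u 1 = -d := by
  refine (nuDeriv_eq_of_polar (ε := -1) hsym hpolar (fun y _ => ?_) (fun y hy => ?_) hΨ).trans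
    (neg_one_mul d)
  · rw [show 0 + -1 * arctan y = arctan (-y) by rw [arctan_neg]; ring, ← neg_sq,
      ← one_add_mul_I_eq_sqrt_mul_exp]
    push_cast
    ring
  · have := neg_pi_div_two_lt_arctan y
    constructor <;> linarith [arctan_le_zero.mpr hy, pi_pos]

theorem nuDeriv_neg_one_eq_of_polar (hsym : ∀ z : ℂ, u (starRingEnd ℂ z) = u z)
    (hpolar : ∀ r : ℝ, 0 < r → ∀ θ ∈ Icc 0 π, u (r * Complex.exp (θ * I)) = r ^ κ * Ψ θ)
    {d : ℝ} (hΨ : HasDerivAt Ψ d π) : nuDeriv u (-1) = d := by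
  refine (nuDeriv_eq_of_polar (ε := 1) hsym hpolar (fun y _ => ?_) (fun y hy => ?_) hΨ).trans
    (one_mul d)
  · rw [one_mul, Complex.ofReal_add, add_mul, Complex.exp_add, Complex.exp_pi_mul_I,
      ← mul_assoc, mul_comm _ (-1 : ℂ), mul_assoc, ← one_add_mul_I_eq_sqrt_mul_exp]
    push_cast
    ring
  · have := neg_pi_div_two_lt_arctan y
    constructor <;> linarith [arctan_le_zero.mpr hy, pi_pos]

end Polar

theorem eq_norm_rpow_mul_arg_of_polar {κ : ℝ} {u : ℂ → ℝ} {Ψ : ℝ → ℝ}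
    (hsym : ∀ z : ℂ, u (starRingEnd ℂ z) = u z)
    (hpolar : ∀ r : ℝ, 0 < r → ∀ θ ∈ Icc 0 π, u (r * Complex.exp (θ * I)) = r ^ κ * Ψ θ)
    (heven : ∀ θ, Ψ (-θ) = Ψ θ) {z : ℂ} (hz : z ≠ 0) :
    u z = ‖z‖ ^ κ * Ψ (Complex.arg z) := by
  have hupper {w : ℂ} (hw : w ≠ 0) (him : 0 ≤ w.im) : u w = ‖w‖ ^ κ * Ψ (Complex.arg w) := by
    conv_lhs => rw [← Complex.norm_mul_exp_arg_mul_I w]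
    exact hpolar _ (norm_pos_iff.mpr hw) _
      ⟨Complex.arg_nonneg_iff.mpr him, Complex.arg_le_pi w⟩
  rcases le_or_gt 0 z.im with him | him
  · exact hupper hz him
  · have hconj := hupper (w := starRingEnd ℂ z) ((map_ne_zero _).mpr hz)
      (by rw [Complex.conj_im]; linarith)
    rw [hsym, Complex.norm_conj, Complex.arg_conj] at hconj
    rw [hconj]
    split_ifs with hπ
    · rw [hπ]
    · rw [heven]

theorem hasDerivAt_cos_add_sin (κ A B θ : ℝ) :
    HasDerivAt (fun θ => A * cos (κ * θ) + B * sin (κ * θ))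
      (κ * (B * cos (κ * θ) - A * sin (κ * θ))) θ := by
  have hlin := (hasDerivAt_id θ).const_mul κ
  refine ((hlin.cos.const_mul A).add (hlin.sin.const_mul B)).congr_deriv ?_
  simp only [id, mul_one]
  ring

theorem exponent_cases_of_cos_mul_sin_eq_zero {κ A : ℝ} (hκ : 0 < κ) (hA : A ≠ 0)
    (hcos : 0 ≤ A * cos (κ * π)) (hsin : A * sin (κ * π) ≤ 0)
    (hcompl : cos (κ * π) * sin (κ * π) = 0) :
    ((∃ m : ℕ, κ = 2 * m ∨ κ = 2 * m + 3 / 2) ∧ 0 < A) ∨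
      ((∃ m : ℕ, κ = 2 * m + 1 ∨ κ = 2 * m + 1 / 2) ∧ A < 0) := by
  rcases mul_eq_zero.mp hcompl with hc | hs
  · obtain ⟨k, hk⟩ := cos_eq_zero_iff.mp hc
    have hκk : κ = k + 1 / 2 :=
      mul_right_cancel₀ pi_ne_zero (hk.trans (by ring) : κ * π = (k + 1 / 2) * π)
    lift k to ℕ using by
      have : (-1 : ℝ) < k := by linarith
      exact_mod_cast this
    obtain ⟨m, rfl | rfl⟩ := Nat.even_or_odd' k <;> push_cast at hκk
    · have h1 : sin (κ * π) = 1 := by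
        rw [hκk, show (2 * m + 1 / 2 : ℝ) * π = π / 2 + m * (2 * π) by ring,
          sin_add_nat_mul_two_pi, sin_pi_div_two]
      refine Or.inr ⟨⟨m, Or.inr hκk⟩, ?_⟩
      rw [h1] at hsin
      exact lt_of_le_of_ne (by linarith) hA
    · have h1 : sin (κ * π) = -1 := by
        rw [hκk, show (2 * m + 1 + 1 / 2 : ℝ) * π = π / 2 + π + m * (2 * π) by ring,
          sin_add_nat_mul_two_pi, sin_add_pi, sin_pi_div_two]
      refine Or.inl ⟨⟨m, Or.inr (by rw [hκk]; ring)⟩, ?_⟩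
      rw [h1] at hsin
      exact lt_of_le_of_ne (by linarith) hA.symm
  · obtain ⟨k, hk⟩ := sin_eq_zero_iff.mp hs
    have hκk : κ = k := (mul_right_cancel₀ pi_ne_zero hk).symm
    lift k to ℕ using by
      have : (0 : ℝ) < k := hκk ▸ hκ
      exact_mod_cast this.le
    obtain ⟨m, rfl | rfl⟩ := Nat.even_or_odd' k <;> push_cast at hκk
    · have h1 : cos (κ * π) = 1 := by
        rw [hκk, show (2 * m : ℝ) * π = m * (2 * π) by ring, cos_nat_mul_two_pi]
      refine Or.inl ⟨⟨m, Or.inl hκk⟩, ?_⟩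
      rw [h1] at hcos
      exact lt_of_le_of_ne (by linarith) hA.symm
    · have h1 : cos (κ * π) = -1 := by
        rw [hκk, show (2 * m + 1 : ℝ) * π = m * (2 * π) + π by ring, cos_nat_mul_two_pi_add_pi]
      refine Or.inr ⟨⟨m, Or.inl hκk⟩, ?_⟩
      rw [h1] at hcos
      exact lt_of_le_of_ne (by linarith) hA

theorem exponent_cases_of_signorini {κ A : ℝ} (hκ : 0 < κ) (hA : A ≠ 0)
    (hval : 0 ≤ A * cos (κ * π)) (hnu : 0 ≤ -(κ * (A * sin (κ * π))))
    (hcompl : A * cos (κ * π) * -(κ * (A * sin (κ * π))) = 0) :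
    ((∃ m : ℕ, κ = 2 * m ∨ κ = 2 * m + 3 / 2) ∧ 0 < A) ∨
      ((∃ m : ℕ, κ = 2 * m + 1 ∨ κ = 2 * m + 1 / 2) ∧ A < 0) := by
  refine exponent_cases_of_cos_mul_sin_eq_zero hκ hA hval (by nlinarith) ?_
  have h : (A * A * κ) * (cos (κ * π) * sin (κ * π)) = 0 := by linear_combination -hcompl
  exact (mul_eq_zero.mp h).resolve_left (by positivity)

theorem exists_nat_div_two_of_exponent_cases {κ A : ℝ}
    (h : ((∃ m : ℕ, κ = 2 * m ∨ κ = 2 * m + 3 / 2) ∧ 0 < A) ∨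
      ((∃ m : ℕ, κ = 2 * m + 1 ∨ κ = 2 * m + 1 / 2) ∧ A < 0)) :
    ∃ k : ℕ, κ = k / 2 := by
  rcases h with ⟨⟨m, rfl | rfl⟩, -⟩ | ⟨⟨m, rfl | rfl⟩, -⟩
  exacts [⟨4 * m, by push_cast; ring⟩, ⟨4 * m + 3, by push_cast; ring⟩,
    ⟨4 * m + 2, by push_cast; ring⟩, ⟨4 * m + 1, by push_cast; ring⟩]

theorem classification_of_blowups_general (κ : ℝ) (hκ : 0 < κ) (u₀ : ℂ → ℝ)
    (hcont : Continuous u₀)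
    (hhom : ∀ l : ℝ, 0 < l → ∀ z : ℂ, u₀ ((l : ℂ) * z) = l ^ κ * u₀ z)
    (hsym : ∀ z : ℂ, u₀ ((starRingEnd ℂ) z) = u₀ z)
    (hup : HarmonicOn2 u₀ {z : ℂ | 0 < z.im})
    (hsig : ∀ x : ℝ, x < 0 →
      0 ≤ u₀ (x : ℂ) ∧ 0 ≤ nuDeriv u₀ x ∧ u₀ (x : ℂ) * nuDeriv u₀ x = 0)
    (hneu : ∀ x : ℝ, 0 < x → nuDeriv u₀ x = 0)
    (hne : ∃ z : ℂ, u₀ z ≠ 0) :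
    ∃ b : ℝ, b ≠ 0 ∧
      (∀ z : ℂ, z ≠ 0 → u₀ z = b * ‖z‖ ^ κ * Real.cos (κ * Complex.arg z)) ∧
      (((∃ m : ℕ, κ = 2 * m ∨ κ = 2 * m + 3/2) ∧ 0 < b) ∨
        ((∃ m : ℕ, κ = 2 * m + 1 ∨ κ = 2 * m + 1/2) ∧ b < 0)) ∧
      ∃ k : ℕ, κ = k / 2 := by
  have hu : IsPosHomogeneous κ u₀ := fun l hl z => by
    rw [Complex.real_smul, hhom l hl z, smul_eq_mul]
  obtain ⟨A, B, hpolar⟩ := hu.exists_polar_eq_cos_sin hκ.ne' hcont hup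
  obtain rfl : B = 0 := by
    simpa [hκ.ne'] using (nuDeriv_one_eq_of_polar hsym hpolar
      (hasDerivAt_cos_add_sin κ A B 0)).symm.trans (hneu 1 one_pos)
  have hformula (z : ℂ) (hz : z ≠ 0) : u₀ z = A * ‖z‖ ^ κ * cos (κ * Complex.arg z) := by
    rw [eq_norm_rpow_mul_arg_of_polar hsym hpolar (by simp) hz]
    ring
  have hA : A ≠ 0 := by
    rintro rfl
    obtain ⟨z, hz⟩ := hne
    rcases eq_or_ne z 0 with rfl | hz0
    exacts [hz (hu.apply_zero hκ.ne'), hz (by simp [hformula z hz0])]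
  have hval : u₀ ((-1 : ℝ) : ℂ) = A * cos (κ * π) := by
    rw [hformula _ (by norm_num), Complex.arg_ofReal_of_neg (by norm_num)]
    simp
  have hnu : nuDeriv u₀ (-1) = -(κ * (A * sin (κ * π))) := by
    rw [nuDeriv_neg_one_eq_of_polar hsym hpolar (hasDerivAt_cos_add_sin κ A 0 π)]
    ring
  obtain ⟨hsig₁, hsig₂, hsig₃⟩ := hsig (-1) (by norm_num)
  simp only [hval, hnu] at hsig₁ hsig₂ hsig₃
  have hcases := exponent_cases_of_signorini hκ hA hsig₁ hsig₂ hsig₃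
  exact ⟨A, hA, hformula, hcases, exists_nat_div_two_of_exponent_cases hcases⟩

/-- classification of homogeneous blowups in 2D: a nonzero continuous
function `u₀ : ℝ² → ℝ`, homogeneous of degree `κ > 0`, symmetric in `{x₂ = 0}`, harmonic
in the open upper and lower half-planes, satisfying the Signorini conditions
`u₀ ≥ 0`, `∂_ν u₀ ≥ 0`, `u₀ ∂_ν u₀ = 0` on `{x₁ < 0}` and `∂_ν u₀ = 0` on `{x₁ > 0}`,
must equal `b r^κ cos(κθ)` with `b ≠ 0`, where either `κ ∈ {2m, 2m + 3/2}` and `b > 0`,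
or `κ ∈ {2m + 1, 2m + 1/2}` and `b < 0`; in particular `κ ∈ ½ℕ`. -/
theorem classification_of_blowups (κ : ℝ) (hκ : 0 < κ) (u₀ : ℂ → ℝ)
    (hcont : Continuous u₀)
    (hhom : ∀ l : ℝ, 0 < l → ∀ z : ℂ, u₀ ((l : ℂ) * z) = l ^ κ * u₀ z)
    (hsym : ∀ z : ℂ, u₀ ((starRingEnd ℂ) z) = u₀ z)
    (hup : HarmonicOn2 u₀ {z : ℂ | 0 < z.im})
    (hlow : HarmonicOn2 u₀ {z : ℂ | z.im < 0})
    (hsig : ∀ x : ℝ, x < 0 →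
      0 ≤ u₀ (x : ℂ) ∧ 0 ≤ nuDeriv u₀ x ∧ u₀ (x : ℂ) * nuDeriv u₀ x = 0)
    (hneu : ∀ x : ℝ, 0 < x → nuDeriv u₀ x = 0)
    (hne : ∃ z : ℂ, u₀ z ≠ 0) :
    ∃ b : ℝ, b ≠ 0 ∧
      (∀ z : ℂ, z ≠ 0 → u₀ z = b * ‖z‖ ^ κ * Real.cos (κ * Complex.arg z)) ∧
      (((∃ m : ℕ, κ = 2 * m ∨ κ = 2 * m + 3/2) ∧ 0 < b) ∨
        ((∃ m : ℕ, κ = 2 * m + 1 ∨ κ = 2 * m + 1/2) ∧ b < 0)) ∧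
      ∃ k : ℕ, κ = k / 2 :=
  classification_of_blowups_general κ hκ u₀ hcont hhom hsym hup hsig hneu hne
end
end
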